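/- Let δ be a real number with 0 ≤ δ ≤ 1, and let a ∈ R^w satisfy a_j = 0 for all 1 ≤ j ≤ w−n. Then a′ satisfies at most δ·m of the m linear equations (i.e. #{i : L_i(a′) = 0} ≤ δ·m) if and only if the shifted polynomial Q_S(Y+a) has at least (4−δ)·m non-constant monomials. -/
import Mathlib


open MvPolynomial

open scoped Classical

noncomputable section

/-- Extension of an `m × n` matrix to a function `ℕ → ℕ → R` vanishing outside its range. -/
def Aext {R : Type*} [CommRing R] (n m : ℕ) (A : Matrix (Fin m) (Fin n) R) : ℕ → ℕ → R :=
  fun i j => if h : i < m ∧ j < n then A ⟨i, h.1⟩ ⟨j, h.2⟩ else 0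

/-- The `w × w` matrix `C` of the paper (Section 5), with `w = max (2n) (2m)`:
`C_{i,j} = A_{i, j−w+n}` if `i < m` and `j ≥ w − n` (`0`-indexed), and `0` otherwise;
i.e. `A` is the top right block of `C` and the rest of `C` is zeros. -/
def Cmat {R : Type*} [CommRing R] (n m : ℕ) (A : Matrix (Fin m) (Fin n) R) :
    Matrix (Fin (max (2 * n) (2 * m))) (Fin (max (2 * n) (2 * m))) R :=
  fun i j =>
    if i.val < m ∧ max (2 * n) (2 * m) - n ≤ j.val then
      Aext n m A i.val (j.val - (max (2 * n) (2 * m) - n))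
    else 0

/-- The vector `e ∈ R^w`: `e_i = b_i` for `i < m` and `e_i = 0` otherwise. -/
def evec {R : Type*} [CommRing R] (n m : ℕ) (b : Fin m → R) :
    Fin (max (2 * n) (2 * m)) → R :=
  fun i => if h : i.val < m then b ⟨i.val, h⟩ else 0

/-- The polynomial `Q_S(y_1,…,y_w) = Σ_{i,j} C_{i,j}·y_i·y_j + Σ_i e_i·y_i + e_0`
of Section 5 of the paper. -/
def QS {R : Type*} [CommRing R] (n m : ℕ) (A : Matrix (Fin m) (Fin n) R)
    (b : Fin m → R) (e0 : R) : MvPolynomial (Fin (max (2 * n) (2 * m))) R :=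
  (∑ i, ∑ j, C (Cmat n m A i j) * X i * X j) + (∑ i, C (evec n m b i) * X i) + C e0

/-- The shift of a multivariate polynomial by a vector `a`: the image of `f` under the
`R`-algebra endomorphism sending each variable `y_i` to `y_i + a_i`. -/
def shift {R : Type*} [CommRing R] {σ : Type*} (a : σ → R) (f : MvPolynomial σ R) :
    MvPolynomial σ R :=
  aeval (fun i => X i + C (a i)) f

/-- The projection `a′ ∈ R^n` of `a ∈ R^w` to its last `n` coordinates:
`a′_j = a_{j + w − n}`. -/
def lastn {R : Type*} (n m : ℕ) (a : Fin (max (2 * n) (2 * m)) → R) : Fin n → R :=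
  fun j => a ⟨j.val + (max (2 * n) (2 * m) - n), by have := j.isLt; omega⟩

/-- The number of non-constant monomials (monomials of total degree at least `1`)
with nonzero coefficient in `f`. -/
def nonConst {R : Type*} [CommRing R] {σ : Type*} (f : MvPolynomial σ R) : ℕ :=
  (f.support.filter fun mo => mo ≠ 0).card


/-- first embedding -/
def emb1 (n m : ℕ) (i : Fin m) : Fin (max (2 * n) (2 * m)) :=
  ⟨i.val, by have := i.isLt; omega⟩

/-- second embedding -/
def emb2 (n m : ℕ) (j : Fin n) : Fin (max (2 * n) (2 * m)) :=
  ⟨j.val + (max (2 * n) (2 * m) - n), by have := j.isLt; omega⟩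

lemma emb1_lt (n m : ℕ) (i : Fin m) : (emb1 n m i).val < max (2 * n) (2 * m) - n := by
  have := i.isLt; simp only [emb1]; omega

lemma emb2_ge (n m : ℕ) (j : Fin n) : max (2 * n) (2 * m) - n ≤ (emb2 n m j).val := by
  simp [emb2]

lemma emb1_ne_emb2 (n m : ℕ) (i : Fin m) (j : Fin n) : emb1 n m i ≠ emb2 n m j := by
  have h1 := emb1_lt n m i
  have h2 := emb2_ge n m j
  intro h; rw [h] at h1; omega

lemma emb1_inj (n m : ℕ) : Function.Injective (emb1 n m) := by
  intro i j h
  have : (emb1 n m i).val = (emb1 n m j).val := congrArg Fin.val h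
  exact Fin.ext this

lemma emb2_inj (n m : ℕ) : Function.Injective (emb2 n m) := by
  intro i j h
  have := congrArg Fin.val h
  simp only [emb2] at this
  exact Fin.ext (by omega)

lemma Cmat_emb {R : Type*} [CommRing R] (n m : ℕ) (A : Matrix (Fin m) (Fin n) R)
    (i : Fin m) (j : Fin n) : Cmat n m A (emb1 n m i) (emb2 n m j) = A i j := by
  rw [Cmat, if_pos ⟨(by simpa [emb1] using i.isLt), emb2_ge n m j⟩]
  simp only [emb2, emb1, Nat.add_sub_cancel, Aext]
  rw [dif_pos ⟨i.isLt, j.isLt⟩]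

lemma Cmat_zero_left {R : Type*} [CommRing R] (n m : ℕ) (A : Matrix (Fin m) (Fin n) R)
    (i j : Fin (max (2 * n) (2 * m))) (hi : ¬ i.val < m) : Cmat n m A i j = 0 := by
  rw [Cmat, if_neg (by tauto)]

lemma Cmat_zero_right {R : Type*} [CommRing R] (n m : ℕ) (A : Matrix (Fin m) (Fin n) R)
    (i j : Fin (max (2 * n) (2 * m))) (hj : ¬ max (2 * n) (2 * m) - n ≤ j.val) :
    Cmat n m A i j = 0 := by
  rw [Cmat, if_neg (by tauto)]

lemma evec_emb {R : Type*} [CommRing R] (n m : ℕ) (b : Fin m → R) (i : Fin m) :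
    evec n m b (emb1 n m i) = b i := by
  rw [evec, dif_pos (by simpa [emb1] using i.isLt)]
  exact congrArg b (Fin.ext rfl)

lemma evec_zero {R : Type*} [CommRing R] (n m : ℕ) (b : Fin m → R)
    (i : Fin (max (2 * n) (2 * m))) (hi : ¬ i.val < m) : evec n m b i = 0 := by
  rw [evec, dif_neg hi]

lemma lastn_emb2 {R : Type*} (n m : ℕ) (a : Fin (max (2 * n) (2 * m)) → R) (j : Fin n) :
    a (emb2 n m j) = lastn n m a j := rfl

/-- Reduction of a sum over `Fin w` to the image of `emb1`. -/
lemma sum_emb1 {M : Type*} [AddCommMonoid M] (n m : ℕ)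
    (f : Fin (max (2 * n) (2 * m)) → M)
    (hf : ∀ x, ¬ x.val < m → f x = 0) :
    ∑ x, f x = ∑ i : Fin m, f (emb1 n m i) := by
  rw [← Finset.sum_image (g := emb1 n m) (f := f)
    (fun x _ y _ h => emb1_inj n m h)]
  apply (Finset.sum_subset (Finset.subset_univ _) _).symm
  intro x _ hx
  apply hf
  intro hxm
  exact hx (Finset.mem_image.2 ⟨⟨x.val, hxm⟩, Finset.mem_univ _, Fin.ext rfl⟩)

/-- Reduction of a sum over `Fin w` to the image of `emb2`. -/
lemma sum_emb2 {M : Type*} [AddCommMonoid M] (n m : ℕ)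
    (f : Fin (max (2 * n) (2 * m)) → M)
    (hf : ∀ x, ¬ max (2 * n) (2 * m) - n ≤ x.val → f x = 0) :
    ∑ x, f x = ∑ j : Fin n, f (emb2 n m j) := by
  rw [← Finset.sum_image (g := emb2 n m) (f := f)
    (fun x _ y _ h => emb2_inj n m h)]
  apply (Finset.sum_subset (Finset.subset_univ _) _).symm
  intro x _ hx
  apply hf
  intro hxm
  refine hx (Finset.mem_image.2 ⟨⟨x.val - (max (2 * n) (2 * m) - n), ?_⟩,
    Finset.mem_univ _, Fin.ext ?_⟩)
  · have := x.isLt; omega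
  · simp only [emb2]; omega

section AuxLemmas

variable {R : Type*} [CommRing R] {σ ι : Type*}

lemma coeff_sum_monomial' (s : Finset ι) (d : ι → (σ →₀ ℕ)) (c : ι → R) (e : σ →₀ ℕ) :
    coeff e (∑ t ∈ s, monomial (d t) (c t)) = ∑ t ∈ s, if d t = e then c t else 0 := by
  rw [coeff_sum]
  exact Finset.sum_congr rfl fun t _ => coeff_monomial e (d t) (c t)

lemma support_sum_monomial' (s : Finset ι) (d : ι → (σ →₀ ℕ)) (c : ι → R)
    (hd : Set.InjOn d s) :
    (∑ t ∈ s, monomial (d t) (c t)).support = (s.filter fun t => c t ≠ 0).image d := by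
  ext e
  rw [mem_support_iff, coeff_sum_monomial']
  constructor
  · intro h
    obtain ⟨t, ht, hne⟩ := Finset.exists_ne_zero_of_sum_ne_zero h
    by_cases hdt : d t = e
    · rw [if_pos hdt] at hne
      exact Finset.mem_image.2 ⟨t, Finset.mem_filter.2 ⟨ht, hne⟩, hdt⟩
    · simp [hdt] at hne
  · intro h
    obtain ⟨t, ht, hdt⟩ := Finset.mem_image.1 h
    obtain ⟨hts, hct⟩ := Finset.mem_filter.1 ht
    rw [Finset.sum_eq_single_of_mem t hts fun u hu hut => by
      rw [if_neg]; intro hdu; exact hut (hd hu hts (hdu.trans hdt.symm))]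
    rw [if_pos hdt]; exact hct

end AuxLemmas

lemma shift_QS_eq {R : Type*} [CommRing R] (n m : ℕ) (A : Matrix (Fin m) (Fin n) R)
    (b : Fin m → R) (e0 : R) (a : Fin (max (2 * n) (2 * m)) → R)
    (hsupp : ∀ j : Fin (max (2 * n) (2 * m)), j.val < max (2 * n) (2 * m) - n → a j = 0) :
    shift a (QS n m A b e0)
      = (∑ i : Fin m, ∑ j : Fin n,
          monomial (Finsupp.single (emb1 n m i) 1 + Finsupp.single (emb2 n m j) 1) (A i j))
        + (∑ i : Fin m,
            monomial (Finsupp.single (emb1 n m i) 1) ((∑ j, A i j * lastn n m a j) + b i))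
        + monomial 0 e0 := by
  have ha1 : ∀ i : Fin m, a (emb1 n m i) = 0 := fun i => hsupp _ (emb1_lt n m i)
  have hterm : ∀ (r s : R) (u v : Fin (max (2 * n) (2 * m))),
      C r * (X u + C (0 : R)) * (X v + C s)
        = monomial (Finsupp.single u 1 + Finsupp.single v 1) r
          + monomial (Finsupp.single u 1) (r * s) := by
    intro r s u v
    rw [map_zero, add_zero, mul_add]
    congr 1
    · rw [C_mul_X_eq_monomial, X, monomial_mul, mul_one]
    · rw [mul_comm (C r * X u) (C s), ← mul_assoc, ← C_mul, C_mul_X_eq_monomial, mul_comm s r]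
  rw [QS, shift]
  simp only [map_add, map_sum, map_mul, aeval_X, aeval_C, algebraMap_eq]
  have hq : (∑ i, ∑ j, C (Cmat n m A i j) * (X i + C (a i)) * (X j + C (a j)))
      = (∑ i : Fin m, ∑ j : Fin n,
          monomial (Finsupp.single (emb1 n m i) 1 + Finsupp.single (emb2 n m j) 1) (A i j))
        + ∑ i : Fin m,
            monomial (Finsupp.single (emb1 n m i) 1) (∑ j, A i j * lastn n m a j) := by
    rw [sum_emb1 n m _ (fun x hx => by
      apply Finset.sum_eq_zero
      intro j _
      rw [Cmat_zero_left n m A x j hx, map_zero, zero_mul, zero_mul])]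
    rw [← Finset.sum_add_distrib]
    refine Finset.sum_congr rfl fun i _ => ?_
    rw [sum_emb2 n m _ (fun x hx => by
      rw [Cmat_zero_right n m A _ x hx, map_zero, zero_mul, zero_mul])]
    rw [map_sum, ← Finset.sum_add_distrib]
    refine Finset.sum_congr rfl fun j _ => ?_
    rw [Cmat_emb, ha1 i, lastn_emb2 n m a j]
    exact hterm _ _ _ _
  have hlin : (∑ i, C (evec n m b i) * (X i + C (a i)))
      = ∑ i : Fin m, monomial (Finsupp.single (emb1 n m i) 1) (b i) := by
    rw [sum_emb1 n m _ (fun x hx => by rw [evec_zero n m b x hx, map_zero, zero_mul])]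
    refine Finset.sum_congr rfl fun i _ => ?_
    rw [evec_emb, ha1, map_zero, add_zero, C_mul_X_eq_monomial]
  rw [hq, hlin]
  simp only [C_apply, map_sum]
  rw [Finset.sum_add_distrib]
  abel


/-- The monomial map for the three blocks of the shifted polynomial. -/
def Dfun (n m : ℕ) :
    (Fin m × Fin n) ⊕ (Fin m) ⊕ Unit → (Fin (max (2 * n) (2 * m)) →₀ ℕ) :=
  Sum.elim
    (fun p => Finsupp.single (emb1 n m p.1) 1 + Finsupp.single (emb2 n m p.2) 1)
    (Sum.elim (fun i => Finsupp.single (emb1 n m i) 1) fun _ => 0)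

/-- The coefficient map for the three blocks of the shifted polynomial. -/
def cfun {R : Type*} [CommRing R] (n m : ℕ) (A : Matrix (Fin m) (Fin n) R) (b : Fin m → R)
    (e0 : R) (a : Fin (max (2 * n) (2 * m)) → R) : (Fin m × Fin n) ⊕ (Fin m) ⊕ Unit → R :=
  Sum.elim (fun p => A p.1 p.2)
    (Sum.elim (fun i => (∑ j, A i j * lastn n m a j) + b i) fun _ => e0)

lemma Dfun_inl_ne_zero (n m : ℕ) (p : Fin m × Fin n) : Dfun n m (Sum.inl p) ≠ 0 := by
  intro h0
  have h := DFunLike.congr_fun h0 (emb1 n m p.1)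
  simp [Dfun, Finsupp.single_apply, Ne.symm (emb1_ne_emb2 n m p.1 p.2)] at h

lemma Dfun_inr_inl_ne_zero (n m : ℕ) (i : Fin m) : Dfun n m (Sum.inr (Sum.inl i)) ≠ 0 := by
  intro h0
  have h := DFunLike.congr_fun h0 (emb1 n m i)
  simp [Dfun, Finsupp.single_apply] at h

lemma Dfun_inj (n m : ℕ) : Function.Injective (Dfun n m) := by
  have hne : ∀ (i : Fin m) (j : Fin n), emb2 n m j ≠ emb1 n m i :=
    fun i j => Ne.symm (emb1_ne_emb2 n m i j)
  intro t u h
  rcases t with ⟨i, j⟩ | i | ⟨⟩ <;> rcases u with ⟨i', j'⟩ | i' | ⟨⟩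
  · have hii : emb1 n m i' = emb1 n m i := by
      have h1 := DFunLike.congr_fun h (emb1 n m i)
      simp only [Dfun, Sum.elim_inl, Finsupp.add_apply, Finsupp.single_apply] at h1
      rw [if_neg (hne i j), if_neg (hne i j')] at h1
      by_contra hc
      rw [if_neg hc] at h1
      simp at h1
    have hjj : emb2 n m j' = emb2 n m j := by
      have h2 := DFunLike.congr_fun h (emb2 n m j)
      simp only [Dfun, Sum.elim_inl, Finsupp.add_apply, Finsupp.single_apply] at h2
      rw [if_neg (emb1_ne_emb2 n m i j), if_neg (emb1_ne_emb2 n m i' j)] at h2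
      by_contra hc
      rw [if_neg hc] at h2
      simp at h2
    rw [emb1_inj n m hii, emb2_inj n m hjj]
  · exfalso
    have h2 := DFunLike.congr_fun h (emb2 n m j)
    simp only [Dfun, Sum.elim_inl, Sum.elim_inr, Finsupp.add_apply, Finsupp.single_apply] at h2
    rw [if_neg (emb1_ne_emb2 n m i j), if_neg (emb1_ne_emb2 n m i' j)] at h2
    simp at h2
  · exfalso
    have h2 := DFunLike.congr_fun h (emb2 n m j)
    simp only [Dfun, Sum.elim_inl, Sum.elim_inr, Finsupp.add_apply, Finsupp.single_apply,
      Finsupp.coe_zero, Pi.zero_apply] at h2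
    rw [if_neg (emb1_ne_emb2 n m i j)] at h2
    simp at h2
  · exfalso
    have h2 := DFunLike.congr_fun h (emb2 n m j')
    simp only [Dfun, Sum.elim_inl, Sum.elim_inr, Finsupp.add_apply, Finsupp.single_apply] at h2
    rw [if_neg (emb1_ne_emb2 n m i j'), if_neg (emb1_ne_emb2 n m i' j')] at h2
    simp at h2
  · have hii : emb1 n m i' = emb1 n m i := by
      have h1 := DFunLike.congr_fun h (emb1 n m i)
      simp only [Dfun, Sum.elim_inr, Sum.elim_inl, Finsupp.single_apply] at h1
      by_contra hc
      rw [if_neg hc] at h1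
      simp at h1
    rw [emb1_inj n m hii]
  · exact absurd h (Dfun_inr_inl_ne_zero n m i)
  · exfalso
    have h2 := DFunLike.congr_fun h (emb2 n m j')
    simp only [Dfun, Sum.elim_inl, Sum.elim_inr, Finsupp.add_apply, Finsupp.single_apply,
      Finsupp.coe_zero, Pi.zero_apply] at h2
    rw [if_neg (emb1_ne_emb2 n m i' j')] at h2
    simp at h2
  · exact absurd h.symm (Dfun_inr_inl_ne_zero n m i')
  · rfl

lemma nonConst_shift_QS {R : Type*} [CommRing R] (n m : ℕ) (A : Matrix (Fin m) (Fin n) R)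
    (b : Fin m → R) (e0 : R) (a : Fin (max (2 * n) (2 * m)) → R)
    (hsupp : ∀ j : Fin (max (2 * n) (2 * m)), j.val < max (2 * n) (2 * m) - n → a j = 0) :
    nonConst (shift a (QS n m A b e0))
      = (Finset.univ.filter fun p : Fin m × Fin n => A p.1 p.2 ≠ 0).card
        + (Finset.univ.filter fun i : Fin m =>
            ¬ ((∑ j, A i j * lastn n m a j) + b i = 0)).card := by
  have hsum : shift a (QS n m A b e0)
      = ∑ t : (Fin m × Fin n) ⊕ (Fin m) ⊕ Unit,
          monomial (Dfun n m t) (cfun n m A b e0 a t) := by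
    rw [shift_QS_eq n m A b e0 a hsupp, Fintype.sum_sum_type, Fintype.sum_sum_type,
      Fintype.sum_prod_type]
    simp [Dfun, cfun]
    abel
  have hNC : nonConst (shift a (QS n m A b e0))
      = (Finset.univ.filter fun t => cfun n m A b e0 a t ≠ 0 ∧ Dfun n m t ≠ 0).card := by
    rw [nonConst, hsum, support_sum_monomial' _ _ _ ((Dfun_inj n m).injOn),
      ← Finset.card_image_of_injective
        (Finset.univ.filter fun t => cfun n m A b e0 a t ≠ 0 ∧ Dfun n m t ≠ 0)
        (Dfun_inj n m)]
    congr 1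
    ext e
    simp only [Finset.mem_filter, Finset.mem_image, Finset.mem_univ, true_and]
    constructor
    · rintro ⟨⟨t, hct, rfl⟩, hne2⟩
      exact ⟨t, ⟨hct, hne2⟩, rfl⟩
    · rintro ⟨t, ⟨hct, hDt⟩, rfl⟩
      exact ⟨⟨t, hct, rfl⟩, hDt⟩
  rw [hNC, Finset.card_filter, Fintype.sum_sum_type, Fintype.sum_sum_type,
    Fintype.sum_prod_type]
  have h1 : ∀ (i : Fin m) (j : Fin n),
      (if cfun n m A b e0 a (Sum.inl (i, j)) ≠ 0 ∧ Dfun n m (Sum.inl (i, j)) ≠ 0 then 1 else 0)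
        = if A i j ≠ 0 then 1 else 0 := by
    intro i j
    simp [cfun, Dfun_inl_ne_zero n m (i, j)]
  have h2 : ∀ i : Fin m,
      (if cfun n m A b e0 a (Sum.inr (Sum.inl i)) ≠ 0 ∧ Dfun n m (Sum.inr (Sum.inl i)) ≠ 0
          then 1 else 0)
        = if ¬ ((∑ j, A i j * lastn n m a j) + b i = 0) then 1 else 0 := by
    intro i
    simp [cfun, Dfun_inr_inl_ne_zero n m i]
  have h3 : ∀ u : Unit,
      (if cfun n m A b e0 a (Sum.inr (Sum.inr u)) ≠ 0 ∧ Dfun n m (Sum.inr (Sum.inr u)) ≠ 0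
          then 1 else 0) = 0 := by
    intro u
    simp [Dfun]
  simp only [h1, h2, h3, Finset.sum_const_zero, add_zero]
  rw [show (Finset.univ.filter fun p : Fin m × Fin n => A p.1 p.2 ≠ 0).card
        = ∑ x : Fin m, ∑ y : Fin n, if A x y ≠ 0 then 1 else 0 from by
      rw [Finset.card_filter, Fintype.sum_prod_type]]
  rw [show (Finset.univ.filter fun i : Fin m =>
          ¬ ((∑ j, A i j * lastn n m a j) + b i = 0)).card
        = ∑ i : Fin m, if ¬ ((∑ j, A i j * lastn n m a j) + b i = 0) then 1 else 0 from
      Finset.card_filter _ _]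


/-- **Lemma 5.2(1)** (for shifts supported on the last `n` coordinates): let
`0 ≤ δ ≤ 1` be real and let `a ∈ R^w` satisfy `a_j = 0` for all `j ≤ w − n`. Then `a′`
satisfies at most `δ·m` of the `m` linear equations if and only if `Q_S(Y+a)` has at
least `(4−δ)·m` non-constant monomials. -/
theorem satCount_le_iff_nonConst_ge {R : Type*} [CommRing R] (n m : ℕ) (hn : 1 ≤ n)
    (hm : 1 ≤ m) (A : Matrix (Fin m) (Fin n) R)
    (hA : ∀ i, (Finset.univ.filter fun j => A i j ≠ 0).card = 3)
    (b : Fin m → R) (e0 : R)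
    (δ : ℝ) (hδ0 : 0 ≤ δ) (hδ1 : δ ≤ 1)
    (a : Fin (max (2 * n) (2 * m)) → R)
    (hsupp : ∀ j : Fin (max (2 * n) (2 * m)), j.val < max (2 * n) (2 * m) - n → a j = 0) :
    (((Finset.univ.filter fun i : Fin m =>
          (∑ j, A i j * lastn n m a j) + b i = 0).card : ℝ) ≤ δ * m)
      ↔ ((4 - δ) * m ≤ (nonConst (shift a (QS n m A b e0)) : ℝ)) := by
  have hnc := nonConst_shift_QS n m A b e0 a hsupp
  have h3m : (Finset.univ.filter fun p : Fin m × Fin n => A p.1 p.2 ≠ 0).card = 3 * m := by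
    rw [Finset.card_filter, Fintype.sum_prod_type]
    have hrow : ∀ i : Fin m, (∑ j : Fin n, if A i j ≠ 0 then 1 else 0) = 3 := fun i => by
      rw [← Finset.card_filter]; exact hA i
    rw [Finset.sum_congr rfl fun i _ => hrow i, Finset.sum_const, Finset.card_univ,
      Fintype.card_fin, smul_eq_mul, mul_comm]
  have hKK' : (Finset.univ.filter fun i : Fin m =>
        (∑ j, A i j * lastn n m a j) + b i = 0).card
      + (Finset.univ.filter fun i : Fin m =>
        ¬ ((∑ j, A i j * lastn n m a j) + b i = 0)).card = m := by
    rw [Finset.card_filter_add_card_filter_not, Finset.card_univ, Fintype.card_fin]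
  have hcast : (nonConst (shift a (QS n m A b e0)) : ℝ)
      = 3 * m + ((Finset.univ.filter fun i : Fin m =>
          ¬ ((∑ j, A i j * lastn n m a j) + b i = 0)).card : ℝ) := by
    rw [hnc, h3m]; push_cast; ring
  have hKK'r : ((Finset.univ.filter fun i : Fin m =>
        (∑ j, A i j * lastn n m a j) + b i = 0).card : ℝ)
      + ((Finset.univ.filter fun i : Fin m =>
        ¬ ((∑ j, A i j * lastn n m a j) + b i = 0)).card : ℝ) = m := by
    exact_mod_cast hKK'
  rw [hcast]
  constructor
  · intro h; linarith
  · intro h; linarith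

end
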